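/- Let n ≥ 1. Then the real numbers (X_{n-1} + 6)/(X_{n-1} − 2) and 4/(X_{n-1} − 2) lie in the subring ℤ[X_{n-1}] of ℝ, and they satisfy (X_n + 2)/(X_n − 2) = (X_{n-1} + 6)/(X_{n-1} − 2) + X_n·(4/(X_{n-1} − 2)) and ((X_{n-1} + 6)/(X_{n-1} − 2))² − X_n²·(4/(X_{n-1} − 2))² = 1. -/

import Mathlib

/-!
Writing `y = X n` and `x = X (n - 1)`, the only input is `y ^ 2 = 2 + x` (half-angle formula),
i.e. `(y - 2) (y + 2) = x - 2`. Multiplying numerator and denominator of `(y + 2) / (y - 2)` by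
`y + 2` turns it into `(x + 6 + 4 y) / (x - 2)`, and the norm identity is
`(x + 6) ^ 2 - 16 (x + 2) = (x - 2) ^ 2`. Integrality comes from
`4 / (X (m + 1) - 2) = (X (m + 1) + 2) * (4 / (X m - 2))` with `4 / (X 0 - 2) = -2`,
and `(x + 6) / (x - 2) = 1 + 2 * (4 / (x - 2))`.
-/

/-- `X n = 2 cos(2π/2^(n+2))`. -/
noncomputable def X (n : ℕ) : ℝ := 2 * Real.cos (2 * Real.pi / 2 ^ (n + 2))

section HalfAngle

variable {K : Type*} [Field K] {x y : K}

theorem add_six_div_sub_two_eq (hx : x ≠ 2) : (x + 6) / (x - 2) = 1 + 2 * (4 / (x - 2)) := by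
  have : x - 2 ≠ 0 := sub_ne_zero.mpr hx
  field_simp
  ring

theorem four_div_sub_two_eq_of_sq_eq_two_add (h : y ^ 2 = 2 + x) (hx : x ≠ 2) (hy : y ≠ 2) :
    4 / (y - 2) = (y + 2) * (4 / (x - 2)) := by
  have : x - 2 ≠ 0 := sub_ne_zero.mpr hx
  have : y - 2 ≠ 0 := sub_ne_zero.mpr hy
  field_simp
  linear_combination -4 * h

theorem add_two_div_sub_two_eq_of_sq_eq_two_add (h : y ^ 2 = 2 + x) (hx : x ≠ 2) (hy : y ≠ 2) :
    (y + 2) / (y - 2) = (x + 6) / (x - 2) + y * (4 / (x - 2)) := by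
  have : x - 2 ≠ 0 := sub_ne_zero.mpr hx
  have : y - 2 ≠ 0 := sub_ne_zero.mpr hy
  field_simp
  linear_combination -4 * h

theorem sq_sub_sq_mul_sq_eq_one_of_sq_eq_two_add (h : y ^ 2 = 2 + x) (hx : x ≠ 2) :
    ((x + 6) / (x - 2)) ^ 2 - y ^ 2 * (4 / (x - 2)) ^ 2 = 1 := by
  have : x - 2 ≠ 0 := sub_ne_zero.mpr hx
  field_simp
  linear_combination -16 * h

end HalfAngle

theorem X_zero : X 0 = 0 := by
  rw [X, show 2 * Real.pi / 2 ^ (0 + 2) = Real.pi / 2 by ring, Real.cos_pi_div_two, mul_zero]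

theorem X_succ_sq (m : ℕ) : X (m + 1) ^ 2 = 2 + X m := by
  have h := Real.cos_sq (2 * Real.pi / 2 ^ (m + 1 + 2))
  rw [show 2 * (2 * Real.pi / 2 ^ (m + 1 + 2)) = 2 * Real.pi / 2 ^ (m + 2) by ring] at h
  rw [X, X, mul_pow, h]
  ring

theorem X_lt_two (m : ℕ) : X m < 2 := by
  have hangle_pos : 0 < 2 * Real.pi / 2 ^ (m + 2) := by positivity
  have hangle_le : 2 * Real.pi / 2 ^ (m + 2) ≤ Real.pi / 2 := by
    rw [div_le_div_iff₀ (by positivity) two_pos, pow_add]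
    have : (1 : ℝ) ≤ 2 ^ m := one_le_pow₀ one_le_two
    nlinarith [Real.pi_pos]
  have := Real.cos_lt_cos_of_nonneg_of_le_pi_div_two le_rfl hangle_le hangle_pos
  rw [Real.cos_zero] at this
  rw [X]
  linarith

theorem X_ne_two (m : ℕ) : X m ≠ 2 := (X_lt_two m).ne

theorem adjoin_X_le_adjoin_X_succ (m : ℕ) :
    Algebra.adjoin ℤ ({X m} : Set ℝ) ≤ Algebra.adjoin ℤ {X (m + 1)} := by
  apply Algebra.adjoin_singleton_le
  rw [show X m = X (m + 1) ^ 2 - 2 by rw [X_succ_sq]; ring]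
  exact sub_mem (pow_mem (Algebra.self_mem_adjoin_singleton ℤ _) 2) (ofNat_mem _ 2)

theorem four_div_X_sub_two_mem_adjoin (m : ℕ) :
    4 / (X m - 2) ∈ Algebra.adjoin ℤ ({X m} : Set ℝ) := by
  induction m with
  | zero =>
    rw [X_zero, show (4 : ℝ) / (0 - 2) = -2 by norm_num]
    exact neg_mem (ofNat_mem _ 2)
  | succ m ih =>
    rw [four_div_sub_two_eq_of_sq_eq_two_add (X_succ_sq m) (X_ne_two m) (X_ne_two (m + 1))]
    exact mul_mem (add_mem (Algebra.self_mem_adjoin_singleton ℤ _) (ofNat_mem _ 2))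
      (adjoin_X_le_adjoin_X_succ m ih)

theorem stmt11 (n : ℕ) (hn : 1 ≤ n) :
    (X (n - 1) + 6) / (X (n - 1) - 2) ∈ Algebra.adjoin ℤ ({X (n - 1)} : Set ℝ) ∧
    4 / (X (n - 1) - 2) ∈ Algebra.adjoin ℤ ({X (n - 1)} : Set ℝ) ∧
    (X n + 2) / (X n - 2)
      = (X (n - 1) + 6) / (X (n - 1) - 2) + X n * (4 / (X (n - 1) - 2)) ∧
    ((X (n - 1) + 6) / (X (n - 1) - 2)) ^ 2 - X n ^ 2 * (4 / (X (n - 1) - 2)) ^ 2 = 1 := by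
  obtain ⟨m, rfl⟩ : ∃ m, n = m + 1 := ⟨n - 1, by omega⟩
  rw [Nat.add_sub_cancel]
  have h4 := four_div_X_sub_two_mem_adjoin m
  refine ⟨?_, h4, add_two_div_sub_two_eq_of_sq_eq_two_add (X_succ_sq m) (X_ne_two m)
    (X_ne_two (m + 1)), sq_sub_sq_mul_sq_eq_one_of_sq_eq_two_add (X_succ_sq m) (X_ne_two m)⟩
  rw [add_six_div_sub_two_eq (X_ne_two m)]
  exact add_mem (one_mem _) (mul_mem (ofNat_mem _ 2) h4)
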